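/- If G is a connected (P2 + 2P1)-free finite simple graph, then every vertex of G of maximum degree lies on every longest path of G (i.e., every vertex of degree Δ(G) is a Gallai vertex). -/

import Mathlib

open SimpleGraph

/-- `p` is a longest path in the graph `G`. -/
def IsLongestPath {V : Type} (G : SimpleGraph V) {u v : V} (p : G.Walk u v) : Prop :=
  p.IsPath ∧ ∀ (a b : V) (q : G.Walk a b), q.IsPath → q.length ≤ p.length

/-- The graph `P₂ + 2P₁`: the disjoint union of a single edge and two isolated
vertices. -/
def P2plus2P1 : SimpleGraph (Fin 4) := fromEdgeSet {s(0, 1)}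

/-!
Let `v` be a vertex of maximum degree `Δ` off a longest path `x₀ x₁ … x_k`. Each of the following
facts holds because otherwise the path and some vertex `w` off it could be rearranged into a walk
whose vertex list is a permutation of `w :: [x₀, …, x_k]`, i.e. a longer path: the ends `x₀`, `x_k`
have no neighbours off the path; `x₀ x_k` is not an edge (connectivity would let a longer path
leave the resulting cycle); `v` is adjacent to no two consecutive `x_i`; and the set
`T = {x₀} ∪ {x_{i+1} | v ~ x_i}` is independent (for `i < j` and an edge `x_{i+1} x_{j+1}`, use
`x₀…x_i v x_j…x_{i+1} x_{j+1}…x_k`).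

`(P₂ + 2P₁)`-freeness says that the vertices adjacent to neither end of an edge form a clique.
Applied to an edge `v z` with `z` off the path and to `x₀`, `x_k`, it puts all neighbours of `v`
on the path, so `|T| = Δ + 1`. Applied to an edge `u v`, it shows that `u` is adjacent to all but
at most one vertex of `T`, and to `v`, so `deg u ≥ Δ + 1`.
-/

namespace SimpleGraph

variable {V : Type*} {G : SimpleGraph V}

theorem adj_of_isEmpty_P2plus2P1_embedding (hfree : IsEmpty (P2plus2P1 ↪g G)) {u v x y : V}
    (huv : G.Adj u v) (hxy : x ≠ y) (hux : ¬G.Adj u x) (hvx : ¬G.Adj v x)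
    (huy : ¬G.Adj u y) (hvy : ¬G.Adj v y) : G.Adj x y := by
  by_contra hnxy
  have hxu : x ≠ u := by rintro rfl; exact hvx huv.symm
  have hyu : y ≠ u := by rintro rfl; exact hvy huv.symm
  have hxv : x ≠ v := by rintro rfl; exact hux huv
  have hyv : y ≠ v := by rintro rfl; exact huy huv
  refine hfree.false ⟨⟨![u, v, x, y], fun i j hij => ?_⟩, fun {i j} => ?_⟩
  · fin_cases i <;> fin_cases j <;> simp_all [eq_comm, huv.ne]
  · change G.Adj (![u, v, x, y] i) (![u, v, x, y] j) ↔ P2plus2P1.Adj i j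
    fin_cases i <;> fin_cases j <;> simp_all [P2plus2P1, G.adj_comm]

theorem card_le_degree_of_isIndepSet (hfree : IsEmpty (P2plus2P1 ↪g G)) {u v : V}
    [Fintype (G.neighborSet u)] (huv : G.Adj u v) {T : Finset V} (hT : G.IsIndepSet (T : Set V))
    (hvT : ∀ x ∈ T, ¬G.Adj v x) (hv : v ∉ T) : T.card ≤ G.degree u := by
  classical
  have hnonadj : (T.filter (¬G.Adj u ·)).card ≤ 1 := by
    refine Finset.card_le_one.2 fun x hx y hy => by_contra fun hxy => ?_
    simp only [Finset.mem_filter] at hx hy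
    exact hT hx.1 hy.1 hxy (adj_of_isEmpty_P2plus2P1_embedding hfree huv hxy hx.2
      (hvT x hx.1) hy.2 (hvT y hy.1))
  have hsub : insert v (T.filter (G.Adj u ·)) ⊆ G.neighborFinset u := by
    intro x hx
    rcases Finset.mem_insert.1 hx with rfl | hx
    · simpa using huv
    · simpa using (Finset.mem_filter.1 hx).2
  calc T.card = (T.filter (G.Adj u ·)).card + (T.filter (¬G.Adj u ·)).card :=
        (Finset.card_filter_add_card_filter_not _).symm
    _ ≤ (insert v (T.filter (G.Adj u ·))).card := by
        rw [Finset.card_insert_of_notMem fun h => hv (Finset.mem_filter.1 h).1]; omega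
    _ ≤ G.degree u := Finset.card_le_card hsub

end SimpleGraph

namespace IsLongestPath

open Walk

variable {V : Type} {G : SimpleGraph V} {a b v : V} {p : G.Walk a b}

theorem reverse (hp : IsLongestPath G p) : IsLongestPath G p.reverse :=
  ⟨hp.1.reverse, by simpa using hp.2⟩

theorem not_support_perm_cons (hp : IsLongestPath G p) (hv : v ∉ p.support) {x y : V}
    (q : G.Walk x y) : ¬q.support.Perm (v :: p.support) := by
  intro hq
  have hq_path : q.IsPath :=
    (isPath_def q).2 (hq.nodup_iff.2 (List.nodup_cons.2 ⟨hv, hp.1.support_nodup⟩))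
  have hlen := hq.length_eq
  simp only [length_support, List.length_cons] at hlen
  have := hp.2 _ _ q hq_path
  omega

theorem not_adj_start (hp : IsLongestPath G p) (hv : v ∉ p.support) : ¬G.Adj v a :=
  fun h => hp.not_support_perm_cons hv (cons h p) (by simp)

theorem not_adj_end (hp : IsLongestPath G p) (hv : v ∉ p.support) : ¬G.Adj b v :=
  fun h => hp.reverse.not_adj_start (by simpa using hv) h.symm

theorem start_ne_end_of_adj (hp : IsLongestPath G p) {x y : V} (h : G.Adj x y) : a ≠ b := by
  rintro rfl
  have hxy := hp.2 _ _ (cons h nil) (by simp [h.ne])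
  simp [(isPath_iff_nil.1 hp.1).length_eq_zero] at hxy

theorem not_adj_start_end_of_adj (hp : IsLongestPath G p) (hv : v ∉ p.support) {x : V}
    (hx : x ∈ p.support) (hvx : G.Adj v x) : ¬G.Adj a b := by
  intro hab
  obtain ⟨t, rfl, ht⟩ := mem_support_iff_exists_getVert.1 hx
  cases t with
  | zero => exact hp.not_adj_start hv (by simpa using hvx)
  | succ s =>
    refine hp.not_support_perm_cons hv (cons hvx ((p.drop (s + 1)).append (cons hab.symm
      (p.take s)))) ?_
    simp only [support_cons, support_append, drop_support_eq_support_drop_min, support_take,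
      List.tail_cons, Nat.min_eq_left ht]
    exact (List.perm_append_comm.trans (by rw [List.take_append_drop])).cons v

theorem not_adj_getVert_succ (hp : IsLongestPath G p) (hv : v ∉ p.support) {i : ℕ}
    (hi : i < p.length) (h : G.Adj v (p.getVert i)) : ¬G.Adj v (p.getVert (i + 1)) := by
  intro h'
  refine hp.not_support_perm_cons hv ((p.take i).append (cons h.symm (cons h' (p.drop (i + 1)))))
    ?_
  simp only [support_cons, support_append, drop_support_eq_support_drop_min, support_take,
    List.tail_cons, Nat.min_eq_left hi]
  exact List.perm_middle.trans (by rw [List.take_append_drop])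

theorem not_adj_start_getVert_succ (hp : IsLongestPath G p) (hv : v ∉ p.support) {i : ℕ}
    (hi : i < p.length) (h : G.Adj v (p.getVert i)) : ¬G.Adj a (p.getVert (i + 1)) := by
  intro h'
  refine hp.not_support_perm_cons hv (cons h ((p.take i).reverse.append (cons h'
    (p.drop (i + 1))))) ?_
  simp only [support_cons, support_append, support_reverse, drop_support_eq_support_drop_min,
    support_take, List.tail_cons, Nat.min_eq_left hi]
  exact (((List.reverse_perm _).append_right _).trans (by rw [List.take_append_drop])).cons v

theorem not_adj_getVert_succ_getVert_succ (hp : IsLongestPath G p) (hv : v ∉ p.support)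
    {i j : ℕ} (hij : i < j) (hj : j < p.length) (hi : G.Adj v (p.getVert i))
    (hj' : G.Adj v (p.getVert j)) : ¬G.Adj (p.getVert (i + 1)) (p.getVert (j + 1)) := by
  intro h
  let mid : G.Walk (p.getVert (i + 1)) (p.getVert j) :=
    ((p.take j).drop (i + 1)).copy (by rw [take_getVert, Nat.min_eq_right hij]) rfl
  refine hp.not_support_perm_cons hv ((p.take i).append (cons hi.symm (cons hj'
    (mid.reverse.append (cons h (p.drop (j + 1))))))) ?_
  simp only [mid, support_cons, support_append, support_reverse, support_copy,
    drop_support_eq_support_drop_min, support_take, take_length, List.tail_cons,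
    Nat.min_eq_left hj.le, Nat.min_eq_left (hij : i + 1 ≤ j), Nat.min_eq_left hj]
  have hsplit : p.support.take (i + 1) ++ (p.support.take (j + 1)).drop (i + 1) ++
      p.support.drop (j + 1) = p.support := by
    have htake : p.support.take (i + 1) = (p.support.take (j + 1)).take (i + 1) := by
      rw [List.take_take, Nat.min_eq_left (by omega)]
    rw [htake, List.take_append_drop, List.take_append_drop]
  refine List.perm_middle.trans (List.Perm.cons v ?_)
  conv_rhs => rw [← hsplit, List.append_assoc]
  exact ((List.reverse_perm _).append_right _).append_left _

theorem mem_support_of_adj (hp : IsLongestPath G p) (hconn : G.Connected)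
    (hfree : IsEmpty (P2plus2P1 ↪g G)) (hv : v ∉ p.support) {z : V} (hvz : G.Adj v z) :
    z ∈ p.support := by
  by_contra hz
  obtain ⟨w⟩ := hconn v a
  obtain ⟨d, -, hd_out, hd_in⟩ :=
    w.exists_boundary_dart {x | x ∉ p.support} hv (by simp [start_mem_support])
  have hab := hp.not_adj_start_end_of_adj hd_out (by simpa using hd_in) d.adj
  exact hab (adj_of_isEmpty_P2plus2P1_embedding hfree hvz (hp.start_ne_end_of_adj hvz)
    (hp.not_adj_start hv) (hp.not_adj_start hz) (fun h => hp.not_adj_end hv h.symm)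
    (fun h => hp.not_adj_end hz h.symm))

theorem card_filter_adj_getVert (hp : IsLongestPath G p) (hv : v ∉ p.support)
    (hN : ∀ z, G.Adj v z → z ∈ p.support) [DecidableRel G.Adj] [Fintype (G.neighborSet v)] :
    ((Finset.range p.length).filter fun i => G.Adj v (p.getVert i)).card = G.degree v := by
  classical
  rw [← card_neighborFinset_eq_degree, ← Finset.card_image_of_injOn fun i hi j hj =>
    hp.1.getVert_injOn (Finset.mem_range.1 (Finset.mem_filter.1 hi).1).le
      (Finset.mem_range.1 (Finset.mem_filter.1 hj).1).le]
  congr 1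
  ext z
  simp only [Finset.mem_image, Finset.mem_filter, Finset.mem_range, mem_neighborFinset]
  refine ⟨fun ⟨i, ⟨_, hvi⟩, hiz⟩ => hiz ▸ hvi, fun hvz => ?_⟩
  obtain ⟨i, rfl, hi⟩ := mem_support_iff_exists_getVert.1 (hN z hvz)
  refine ⟨i, ⟨lt_of_le_of_ne hi fun h => ?_, hvz⟩, rfl⟩
  exact hp.not_adj_end hv (by rw [h, getVert_length] at hvz; exact hvz.symm)

theorem exists_isIndepSet_card_eq (hp : IsLongestPath G p) (hv : v ∉ p.support)
    (hN : ∀ z, G.Adj v z → z ∈ p.support) [DecidableRel G.Adj] [Fintype (G.neighborSet v)] :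
    ∃ T : Finset V, G.IsIndepSet (T : Set V) ∧ (∀ x ∈ T, ¬G.Adj v x) ∧ v ∉ T ∧
      T.card = G.degree v + 1 := by
  classical
  set I := (Finset.range p.length).filter fun i => G.Adj v (p.getVert i)
  have hI {i : ℕ} : i ∈ I ↔ i < p.length ∧ G.Adj v (p.getVert i) := by simp [I]
  have hinj {i j : ℕ} (hi : i ≤ p.length) (hj : j ≤ p.length) (h : p.getVert i = p.getVert j) :
      i = j := hp.1.getVert_injOn hi hj h
  refine ⟨insert a (I.image fun i => p.getVert (i + 1)), ?_, ?_, ?_, ?_⟩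
  · intro x hx y hy hxy
    simp only [Finset.coe_insert, Finset.coe_image, Set.mem_insert_iff, Set.mem_image,
      Finset.mem_coe, hI] at hx hy
    have hstart {j : ℕ} (hj : j < p.length ∧ G.Adj v (p.getVert j)) :
        ¬G.Adj a (p.getVert (j + 1)) := hp.not_adj_start_getVert_succ hv hj.1 hj.2
    rcases hx with rfl | ⟨i, hi, rfl⟩ <;> rcases hy with rfl | ⟨j, hj, rfl⟩
    · exact absurd rfl hxy
    · exact hstart hj
    · exact fun h => hstart hi h.symm
    · rcases lt_trichotomy i j with hij | rfl | hji
      · exact hp.not_adj_getVert_succ_getVert_succ hv hij hj.1 hi.2 hj.2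
      · exact absurd rfl hxy
      · exact fun h => hp.not_adj_getVert_succ_getVert_succ hv hji hi.1 hj.2 hi.2 h.symm
  · simp only [Finset.mem_insert, Finset.mem_image, hI]
    rintro x (rfl | ⟨i, ⟨hi, hvi⟩, rfl⟩)
    · exact hp.not_adj_start hv
    · exact hp.not_adj_getVert_succ hv hi hvi
  · simp only [Finset.mem_insert, Finset.mem_image, not_or, not_exists, not_and]
    exact ⟨fun h => hv (h ▸ p.start_mem_support), fun i _ h => hv (h ▸ p.getVert_mem_support _)⟩
  · rw [Finset.card_insert_of_notMem, Finset.card_image_of_injOn,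
      hp.card_filter_adj_getVert hv hN]
    · intro i hi j hj h
      have := hinj (hI.1 hi).1 (hI.1 hj).1 h
      omega
    · simp only [Finset.mem_image, not_exists, not_and]
      intro i hi h
      have := hinj (hI.1 hi).1 (Nat.zero_le _) (h.trans p.getVert_zero.symm)
      omega

end IsLongestPath

/-- In a connected `(P₂ + 2P₁)`-free graph, every vertex of maximum degree lies on
every longest path. -/
theorem gallai_of_P2_2P1_free {V : Type} [Fintype V] (G : SimpleGraph V) [DecidableRel G.Adj]
    (hconn : G.Connected) (hfree : IsEmpty (P2plus2P1 ↪g G))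
    (v : V) (hv : G.degree v = G.maxDegree)
    {a b : V} (p : G.Walk a b) (hp : IsLongestPath G p) :
    v ∈ p.support := by
  by_contra hvp
  have : Nontrivial V := nontrivial_of_ne v a fun h => hvp (h ▸ p.start_mem_support)
  obtain ⟨u, hvu⟩ := hconn.preconnected.exists_adj_of_nontrivial v
  obtain ⟨T, hT, hTv, hvT, hTcard⟩ :=
    hp.exists_isIndepSet_card_eq hvp fun z => hp.mem_support_of_adj hconn hfree hvp
  have := card_le_degree_of_isIndepSet hfree hvu.symm hT hTv hvT
  have := G.degree_le_maxDegree u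
  omega
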